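/- Let Ω ⊆ ℝ^N be a bounded open set and let A be a nonempty bounded subset of ℝ^N with closure(A) ⊆ Ω and of Lebesgue measure zero. If γ is a positive real number with γ < N − upper box dimension of A, then the function x ↦ d(x,A)^(−γ) belongs to L^1(Ω). -/

import Mathlib

/-!
Write `f = d(·, A)`. A cover of `A` by `n(δ)` balls of radius `δ` yields a cover of `{f < δ}` by
balls of radius `2δ`, so `|{f < δ}| ≲ n(δ) δ^N`; for `s` above the upper box dimension,
`n(δ) ≤ δ^(-s)` for small `δ`, whence `|{f < δ}| ≲ δ^(N - s)`. By the layer-cake formula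
`∫_Ω f^(-γ) = ∫₀^∞ |Ω ∩ {f^(-γ) > t}| dt`, and the integrand is `≲ t^(-(N - s)/γ)` for large `t`,
which is integrable as soon as `γ < N - s`.

The packing bound `n(δ) ≲ δ^(-N)` is needed too: it makes the `limsup` defining the box dimension
a bounded one, and not a junk value.
-/

open Metric Filter Set MeasureTheory


/-- The least number of open balls of radius `δ` needed to cover `A`
(defined as `0` by convention if no finite cover exists). -/
noncomputable def coveringNumber {X : Type*} [PseudoMetricSpace X] (δ : ℝ) (A : Set X) : ℕ :=
  sInf {n : ℕ | ∃ t : Finset X, t.card = n ∧ A ⊆ ⋃ x ∈ t, Metric.ball x δ}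

/-- Upper box (Minkowski) dimension of a set in a metric space. -/
noncomputable def upperBoxDim {X : Type*} [PseudoMetricSpace X] (A : Set X) : ℝ :=
  Filter.limsup (fun δ : ℝ => Real.log (coveringNumber δ A : ℝ) / Real.log (1 / δ))
    (nhdsWithin 0 (Set.Ioi 0))

/-- Lower box (Minkowski) dimension of a set in a metric space. -/
noncomputable def lowerBoxDim {X : Type*} [PseudoMetricSpace X] (A : Set X) : ℝ :=
  Filter.liminf (fun δ : ℝ => Real.log (coveringNumber δ A : ℝ) / Real.log (1 / δ))
    (nhdsWithin 0 (Set.Ioi 0))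

open Module Topology
open scoped ENNReal NNReal

theorem integrable_rpow_neg_of_measure_lt_le {α : Type*} [MeasurableSpace α] {μ : Measure α}
    [IsFiniteMeasure μ] {f : α → ℝ} (hf : AEMeasurable f μ) (hf₀ : ∀ x, 0 ≤ f x)
    {γ β C : ℝ} (hγ : 0 < γ) (hγβ : γ < β)
    (hμ : ∀ᶠ δ in 𝓝[>] 0, μ {x | f x < δ} ≤ ENNReal.ofReal (C * δ ^ β)) :
    Integrable (fun x => f x ^ (-γ)) μ := by
  have hF₀ : 0 ≤ᵐ[μ] fun x => f x ^ (-γ) := ae_of_all _ fun x => Real.rpow_nonneg (hf₀ x) _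
  refine ⟨(hf.pow_const _).aestronglyMeasurable, ?_⟩
  rw [hasFiniteIntegral_iff_ofReal hF₀, lintegral_eq_lintegral_meas_lt μ hF₀ (hf.pow_const _)]
  obtain ⟨δ₀, hδ₀, hμ₀⟩ := mem_nhdsGT_iff_exists_Ioo_subset.1 hμ
  have hγ' : -γ < 0 := neg_lt_zero.2 hγ
  set T := δ₀ ^ (-γ)
  have hT : 0 < T := Real.rpow_pos_of_pos hδ₀ _
  have htail : ∀ t ∈ Ioi T, μ {x | t < f x ^ (-γ)} ≤ ENNReal.ofReal (C * t ^ (-(β / γ))) := by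
    intro t ht
    have ht₀ : 0 < t := hT.trans ht
    -- `0 ^ (-γ) = 0`, so only points with `f x > 0` lie above level `t`
    have hlevel : {x | t < f x ^ (-γ)} ⊆ {x | f x < t ^ (-γ)⁻¹} := by
      intro x hx
      have hfx : 0 < f x := (hf₀ x).lt_of_ne fun h => by
        simp only [mem_ofPred_eq, ← h, Real.zero_rpow hγ'.ne] at hx
        exact ht₀.not_gt hx
      exact (Real.lt_rpow_inv_iff_of_neg hfx ht₀ hγ').2 hx
    calc μ {x | t < f x ^ (-γ)} ≤ μ {x | f x < t ^ (-γ)⁻¹} := measure_mono hlevel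
      _ ≤ ENNReal.ofReal (C * (t ^ (-γ)⁻¹) ^ β) :=
        hμ₀ ⟨Real.rpow_pos_of_pos ht₀ _, (Real.rpow_inv_lt_iff_of_neg ht₀ hδ₀ hγ').2 ht⟩
      _ = ENNReal.ofReal (C * t ^ (-(β / γ))) := by
        rw [← Real.rpow_mul ht₀.le, inv_neg, neg_mul, inv_mul_eq_div]
  have hint : IntegrableOn (fun t : ℝ => C * t ^ (-(β / γ))) (Ioi T) :=
    (integrableOn_Ioi_rpow_of_lt (neg_lt_neg_iff.2 ((one_lt_div hγ).2 hγβ)) hT).const_mul C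
  calc ∫⁻ t in Ioi 0, μ {x | t < f x ^ (-γ)}
      ≤ (∫⁻ t in Ioc 0 T, μ {x | t < f x ^ (-γ)}) + ∫⁻ t in Ioi T, μ {x | t < f x ^ (-γ)} := by
        rw [← Ioc_union_Ioi_eq_Ioi hT.le]
        exact lintegral_union_le _ _ _
    _ ≤ (∫⁻ _ in Ioc 0 T, μ univ) + ∫⁻ t in Ioi T, ENNReal.ofReal (C * t ^ (-(β / γ))) :=
        add_le_add (lintegral_mono fun t => measure_mono (subset_univ _))
          (setLIntegral_mono' measurableSet_Ioi htail)
    _ < ⊤ := by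
        rw [setLIntegral_const, Real.volume_Ioc]
        exact ENNReal.add_lt_top.2 ⟨ENNReal.mul_lt_top (measure_lt_top _ _) ENNReal.ofReal_lt_top,
          hint.lintegral_lt_top⟩

section PseudoMetricSpace

variable {X : Type*} [PseudoMetricSpace X] {A : Set X} {δ : ℝ}

theorem exists_finset_card_eq_coveringNumber (hA : TotallyBounded A) (hδ : 0 < δ) :
    ∃ t : Finset X, t.card = coveringNumber δ A ∧ A ⊆ ⋃ x ∈ t, ball x δ := by
  obtain ⟨t, ht, hAt⟩ := totallyBounded_iff.1 hA δ hδ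
  exact Nat.sInf_mem (s := {n | ∃ t : Finset X, t.card = n ∧ A ⊆ ⋃ x ∈ t, ball x δ})
    ⟨ht.toFinset.card, ht.toFinset, rfl, by simpa using hAt⟩

theorem coveringNumber_pos (hne : A.Nonempty) (hA : TotallyBounded A) (hδ : 0 < δ) :
    0 < coveringNumber δ A := by
  obtain ⟨t, ht, hAt⟩ := exists_finset_card_eq_coveringNumber hA hδ
  obtain ⟨x, hx, -⟩ := mem_iUnion₂.1 (hAt hne.some_mem)
  exact ht ▸ Finset.card_pos.2 ⟨x, hx⟩

theorem coveringNumber_le_externalCoveringNumber {ε : ℝ≥0} (hε : (ε : ℝ) < δ) :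
    (coveringNumber δ A : ℕ∞) ≤ externalCoveringNumber ε A := by
  refine le_iInf₂ fun C hC => ?_
  rcases C.finite_or_infinite with hC_fin | hC_inf
  · rw [hC_fin.encard_eq_coe_toFinset_card, Nat.cast_le]
    refine Nat.sInf_le ⟨hC_fin.toFinset, rfl, fun a ha => ?_⟩
    obtain ⟨c, hc, hac⟩ := hC ha
    refine mem_iUnion₂.2 ⟨c, hC_fin.mem_toFinset.2 hc, ?_⟩
    rw [mem_ball, ← coe_nndist]
    exact lt_of_le_of_lt (NNReal.coe_le_coe.2 (edist_le_coe.1 hac)) hε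
  · simp [hC_inf.encard_eq]

theorem coveringNumber_le_of_forall_isSeparated_card_le {ε : ℝ≥0} (hε : (ε : ℝ) < δ) {K : ℝ}
    (hK : ∀ s : Finset X, ↑s ⊆ A → IsSeparated ε (s : Set X) → (s.card : ℝ) ≤ K) :
    (coveringNumber δ A : ℝ) ≤ K := by
  have hK₀ : 0 ≤ K := by simpa using hK ∅ (by simp) (by simp)
  have hpack : packingNumber ε A ≤ ⌊K⌋₊ := by
    refine iSup₂_le fun C hCA => iSup_le fun hC => ?_
    by_contra! hlt
    obtain ⟨s, hsC, hs⟩ := exists_subset_encard_eq (Order.add_one_le_of_lt hlt)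
    have hs_fin : s.Finite := finite_of_encard_eq_coe hs
    have hcard := hK hs_fin.toFinset (by simpa using hsC.trans hCA) (by simpa using hC.subset hsC)
    have hs_card : s.ncard = ⌊K⌋₊ + 1 := by exact_mod_cast hs_fin.cast_ncard_eq.trans hs
    rw [← ncard_eq_toFinset_card s hs_fin, hs_card, Nat.cast_succ] at hcard
    exact (Nat.lt_floor_add_one K).not_ge hcard
  have hcov : (coveringNumber δ A : ℕ∞) ≤ ⌊K⌋₊ :=
    (coveringNumber_le_externalCoveringNumber hε).trans <|
      (externalCoveringNumber_le_coveringNumber ε A).trans <|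
        (coveringNumber_le_packingNumber ε A).trans hpack
  exact (Nat.cast_le.2 (ENat.natCast_le_natCast.1 hcov)).trans (Nat.floor_le hK₀)

end PseudoMetricSpace

section AddHaar

variable {E : Type*} [NormedAddCommGroup E] [MeasurableSpace E] [BorelSpace E]
  (μ : Measure E) [μ.IsAddHaarMeasure] {A : Set E} {δ : ℝ}

theorem measure_thickening_le_coveringNumber_mul (hA : TotallyBounded A) (hδ : 0 < δ) :
    μ (thickening δ A) ≤ coveringNumber δ A * μ (ball 0 (2 * δ)) := by
  obtain ⟨t, ht, hAt⟩ := exists_finset_card_eq_coveringNumber hA hδ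
  have hsub : thickening δ A ⊆ ⋃ y ∈ t, ball y (2 * δ) := by
    intro x hx
    obtain ⟨a, ha, hxa⟩ := mem_thickening_iff.1 hx
    obtain ⟨y, hy, hay⟩ := mem_iUnion₂.1 (hAt ha)
    refine mem_iUnion₂.2 ⟨y, hy, ?_⟩
    rw [mem_ball] at hay ⊢
    linarith [dist_triangle x a y]
  calc μ (thickening δ A) ≤ ∑ y ∈ t, μ (ball y (2 * δ)) :=
        (measure_mono hsub).trans (measure_biUnion_finset_le _ _)
    _ = coveringNumber δ A * μ (ball 0 (2 * δ)) := by
        simp only [Measure.addHaar_ball_center, Finset.sum_const, nsmul_eq_mul, ht]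

theorem card_mul_measure_ball_le_of_isSeparated {s : Finset E} {ε : ℝ≥0} {R : ℝ}
    (hs : IsSeparated ε (s : Set E)) (hsR : (s : Set E) ⊆ closedBall 0 R) :
    s.card * μ (ball 0 (ε / 2)) ≤ μ (ball 0 (R + ε / 2)) := by
  have hdisj : (s : Set E).PairwiseDisjoint fun x => ball x (ε / 2) := by
    intro x hx y hy hxy
    have hxy' : (ε : ℝ) < dist x y := by
      have : (ε : ℝ≥0∞) < edist x y := hs hx hy hxy
      rw [edist_nndist, ENNReal.coe_lt_coe] at this
      rwa [← coe_nndist, NNReal.coe_lt_coe]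
    exact ball_disjoint_ball (by linarith)
  have hsub : (⋃ x ∈ s, ball x (ε / 2)) ⊆ ball (0 : E) (R + ε / 2) := by
    refine iUnion₂_subset fun x hx => ball_subset_ball' ?_
    have := mem_closedBall.1 (hsR hx)
    linarith
  calc s.card * μ (ball 0 (ε / 2)) = ∑ x ∈ s, μ (ball x (ε / 2)) := by
        simp only [Measure.addHaar_ball_center, Finset.sum_const, nsmul_eq_mul]
    _ = μ (⋃ x ∈ s, ball x (ε / 2)) :=
        (measure_biUnion_finset hdisj fun _ _ => measurableSet_ball).symm
    _ ≤ μ (ball 0 (R + ε / 2)) := measure_mono hsub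

end AddHaar

section FiniteDimensional

variable {E : Type*} [NormedAddCommGroup E] [NormedSpace ℝ E] [FiniteDimensional ℝ E]
  {A : Set E}

theorem exists_coveringNumber_le_mul_rpow (hA : Bornology.IsBounded A) :
    ∃ C, ∀ δ ∈ Ioc (0 : ℝ) 1, (coveringNumber δ A : ℝ) ≤ C * δ ^ (-(finrank ℝ E : ℝ)) := by
  borelize E
  let μ : Measure E := Measure.addHaar
  obtain ⟨R, hR⟩ := hA.subset_closedBall 0
  set b := (μ (ball 0 1)).toReal
  set V := (μ (ball 0 (R + 1))).toReal
  have hb : 0 < b := ENNReal.toReal_pos (measure_ball_pos μ 0 one_pos).ne' measure_ball_lt_top.ne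
  refine ⟨4 ^ finrank ℝ E * V / b, fun δ ⟨hδ, hδ₁⟩ => ?_⟩
  have hδ₄ : 0 < (δ / 4) ^ finrank ℝ E * b := by positivity
  refine coveringNumber_le_of_forall_isSeparated_card_le (ε := ⟨δ / 2, by positivity⟩)
    (show δ / 2 < δ by linarith) fun s hsA hs => ?_
  have hball : μ (ball 0 (R + δ / 2 / 2)) ≤ μ (ball 0 (R + 1)) :=
    measure_mono (ball_subset_ball (by linarith))
  have hcard := (card_mul_measure_ball_le_of_isSeparated μ hs (hsA.trans hR)).trans hball
  change (s.card : ℝ≥0∞) * μ (ball 0 (δ / 2 / 2)) ≤ _ at hcard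
  rw [Measure.addHaar_ball_of_pos μ _ (by positivity)] at hcard
  have hcard' : s.card * ((δ / 4) ^ finrank ℝ E * b) ≤ V := by
    have := ENNReal.toReal_mono measure_ball_lt_top.ne hcard
    rwa [ENNReal.toReal_mul, ENNReal.toReal_mul, ENNReal.toReal_natCast,
      ENNReal.toReal_ofReal (by positivity), div_div, show (2 : ℝ) * 2 = 4 by norm_num] at this
  rw [Real.rpow_neg hδ.le, Real.rpow_natCast]
  calc (s.card : ℝ) ≤ V / ((δ / 4) ^ finrank ℝ E * b) := (le_div_iff₀ hδ₄).2 hcard'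
    _ = 4 ^ finrank ℝ E * V / b * (δ ^ finrank ℝ E)⁻¹ := by
        rw [div_pow]; field_simp

end FiniteDimensional

theorem log_div_log_one_div_le_iff {n δ s : ℝ} (hn : 0 < n) (hδ : 0 < δ) (hδ₁ : δ < 1) :
    Real.log n / Real.log (1 / δ) ≤ s ↔ n ≤ δ ^ (-s) := by
  rw [div_le_iff₀ (Real.log_pos (one_lt_one_div hδ hδ₁)),
    ← Real.log_le_log_iff hn (Real.rpow_pos_of_pos hδ _), Real.log_rpow hδ, one_div, Real.log_inv,
    neg_mul_comm]

section BoxDimension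

variable {E : Type*} [NormedAddCommGroup E] [NormedSpace ℝ E] [FiniteDimensional ℝ E]
  {A : Set E}

theorem isBoundedUnder_log_coveringNumber_div (hne : A.Nonempty) (hA : Bornology.IsBounded A) :
    IsBoundedUnder (· ≤ ·) (𝓝[>] 0)
      fun δ : ℝ => Real.log (coveringNumber δ A) / Real.log (1 / δ) := by
  obtain ⟨C, hC⟩ := exists_coveringNumber_le_mul_rpow hA
  have hA' : TotallyBounded A := hA.isCompact_closure.totallyBounded.subset subset_closure
  have hCδ : ∀ᶠ δ in 𝓝[>] (0 : ℝ), C * δ < 1 := by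
    have : Tendsto (fun δ : ℝ => C * δ) (𝓝[>] 0) (𝓝 0) := by
      simpa using (continuous_const_mul C).continuousWithinAt.tendsto (x := (0 : ℝ)) (s := Ioi 0)
    exact this.eventually (gt_mem_nhds one_pos)
  refine ⟨finrank ℝ E + 1, eventually_map.2 ?_⟩
  filter_upwards [Ioo_mem_nhdsGT one_pos, hCδ] with δ ⟨hδ, hδ₁⟩ hCδ
  rw [log_div_log_one_div_le_iff (Nat.cast_pos.2 (coveringNumber_pos hne hA' hδ)) hδ hδ₁]
  calc (coveringNumber δ A : ℝ) ≤ C * δ ^ (-(finrank ℝ E : ℝ)) := hC δ ⟨hδ, hδ₁.le⟩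
    _ = C * δ * δ ^ (-(finrank ℝ E + 1 : ℝ)) := by
        rw [neg_add, Real.rpow_add hδ, Real.rpow_neg_one]; field_simp
    _ ≤ δ ^ (-(finrank ℝ E + 1 : ℝ)) :=
        mul_le_of_le_one_left (Real.rpow_nonneg hδ.le _) hCδ.le

theorem eventually_coveringNumber_le_rpow_neg (hne : A.Nonempty) (hA : Bornology.IsBounded A)
    {s : ℝ} (hs : upperBoxDim A < s) :
    ∀ᶠ δ in 𝓝[>] 0, (coveringNumber δ A : ℝ) ≤ δ ^ (-s) := by
  have hA' : TotallyBounded A := hA.isCompact_closure.totallyBounded.subset subset_closure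
  filter_upwards [eventually_lt_of_limsup_lt hs (isBoundedUnder_log_coveringNumber_div hne hA),
    Ioo_mem_nhdsGT one_pos] with δ hlt ⟨hδ, hδ₁⟩
  exact (log_div_log_one_div_le_iff (Nat.cast_pos.2 (coveringNumber_pos hne hA' hδ)) hδ hδ₁).1
    hlt.le

theorem eventually_measure_thickening_le [MeasurableSpace E] [BorelSpace E] (μ : Measure E)
    [μ.IsAddHaarMeasure] (hne : A.Nonempty) (hA : Bornology.IsBounded A) {s : ℝ}
    (hs : upperBoxDim A < s) :
    ∃ C, ∀ᶠ δ in 𝓝[>] 0, μ (thickening δ A) ≤ ENNReal.ofReal (C * δ ^ (finrank ℝ E - s)) := by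
  have hA' : TotallyBounded A := hA.isCompact_closure.totallyBounded.subset subset_closure
  refine ⟨2 ^ finrank ℝ E * (μ (ball 0 1)).toReal, ?_⟩
  filter_upwards [eventually_coveringNumber_le_rpow_neg hne hA hs, self_mem_nhdsWithin]
    with δ hcov (hδ : 0 < δ)
  calc μ (thickening δ A) ≤ coveringNumber δ A * μ (ball 0 (2 * δ)) :=
        measure_thickening_le_coveringNumber_mul μ hA' hδ
    _ = ENNReal.ofReal (coveringNumber δ A * (2 * δ) ^ finrank ℝ E * (μ (ball 0 1)).toReal) := by
        rw [Measure.addHaar_ball_of_pos μ _ (by positivity), ENNReal.ofReal_mul (by positivity),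
          ENNReal.ofReal_mul (by positivity), ENNReal.ofReal_natCast,
          ENNReal.ofReal_toReal measure_ball_lt_top.ne, mul_assoc]
    _ ≤ ENNReal.ofReal (δ ^ (-s) * (2 * δ) ^ finrank ℝ E * (μ (ball 0 1)).toReal) := by
        gcongr
    _ = ENNReal.ofReal (2 ^ finrank ℝ E * (μ (ball 0 1)).toReal * δ ^ (finrank ℝ E - s)) := by
        rw [sub_eq_add_neg, Real.rpow_add hδ, Real.rpow_natCast, mul_pow]; ring_nf

end BoxDimension

theorem integrable_infDist_rpow_general {N : ℕ} (Ω : Set (EuclideanSpace ℝ (Fin N)))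
    (hΩb : Bornology.IsBounded Ω)
    (A : Set (EuclideanSpace ℝ (Fin N))) (hAne : A.Nonempty)
    (hAb : Bornology.IsBounded A)
    (γ : ℝ) (hγ : 0 < γ) (hγdim : γ < (N : ℝ) - upperBoxDim A) :
    MeasureTheory.IntegrableOn (fun x => Metric.infDist x A ^ (-γ)) Ω MeasureTheory.volume := by
  obtain ⟨s, hAs, hsγ⟩ := exists_between (lt_sub_comm.1 hγdim)
  obtain ⟨C, hC⟩ := eventually_measure_thickening_le volume hAne hAb hAs
  rw [finrank_euclideanSpace_fin] at hC
  have : IsFiniteMeasure (volume.restrict Ω) := isFiniteMeasure_restrict.2 hΩb.measure_lt_top.ne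
  refine integrable_rpow_neg_of_measure_lt_le (continuous_infDist_pt A).aemeasurable
    (fun _ => infDist_nonneg) (C := C) hγ (lt_sub_comm.1 hsγ) ?_
  filter_upwards [hC] with δ hδ
  calc volume.restrict Ω {x | infDist x A < δ} ≤ volume {x | infDist x A < δ} :=
        Measure.restrict_apply_le _ _
    _ ≤ volume (thickening δ A) := measure_mono fun x => (mem_thickening_iff_infDist_lt hAne).2
    _ ≤ _ := hδ

/-- Harvey–Polking integrability criterion: if `γ < N - upperBoxDim A`, then
`d(·,A)^(-γ)` is in `L¹(Ω)`. -/
theorem integrable_infDist_rpow {N : ℕ} (Ω : Set (EuclideanSpace ℝ (Fin N)))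
    (hΩo : IsOpen Ω) (hΩb : Bornology.IsBounded Ω)
    (A : Set (EuclideanSpace ℝ (Fin N))) (hAne : A.Nonempty)
    (hAb : Bornology.IsBounded A) (hAΩ : closure A ⊆ Ω) (hA0 : MeasureTheory.volume A = 0)
    (γ : ℝ) (hγ : 0 < γ) (hγdim : γ < (N : ℝ) - upperBoxDim A) :
    MeasureTheory.IntegrableOn (fun x => Metric.infDist x A ^ (-γ)) Ω MeasureTheory.volume :=
  integrable_infDist_rpow_general Ω hΩb A hAne hAb γ hγ hγdim
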